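/- Let G be a group generated by a family X = (x_1, …, x_n) and let k ≥ 1. Any element of G that is conjugate to a product of k palindromes is itself a product of k palindromes if k is even, and a product of k+1 palindromes if k is odd. -/

import Mathlib

/-- The element of `G` represented by a word in the alphabet `X^{±1}`:
a letter `(i, true)` stands for `X i` and `(i, false)` for `(X i)⁻¹`. -/
def evalWord {G : Type*} {n : ℕ} [Group G] (X : Fin n → G) (w : List (Fin n × Bool)) : G :=
  (w.map fun l => if l.2 then X l.1 else (X l.1)⁻¹).prod

/-- `g` is a palindrome with respect to the generating family `X` if it is represented by
some word whose sequence of letters equals its reverse. -/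
def IsPalindrome {G : Type*} {n : ℕ} [Group G] (X : Fin n → G) (g : G) : Prop :=
  ∃ w : List (Fin n × Bool), w.reverse = w ∧ evalWord X w = g

/-- `g` is a product of `k` palindromes with respect to `X`. -/
def IsPalProd {G : Type*} {n : ℕ} [Group G] (X : Fin n → G) (k : ℕ) (g : G) : Prop :=
  ∃ f : Fin k → G, (∀ i, IsPalindrome X (f i)) ∧ (List.ofFn f).prod = g

/-- The palindromic length of `g` with respect to `X`, valued in `ℕ∞`. -/
noncomputable def palLength {G : Type*} {n : ℕ} [Group G] (X : Fin n → G) (g : G) : ℕ∞ :=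
  sInf {k : ℕ∞ | ∃ m : ℕ, k = (m : ℕ∞) ∧ IsPalProd X m g}

/-- The palindromic width of `G` with respect to `X`, valued in `ℕ∞`. -/
noncomputable def palWidth {G : Type*} {n : ℕ} [Group G] (X : Fin n → G) : ℕ∞ :=
  ⨆ g : G, palLength X g

/-! Let `c` be represented by a word `u` and put `r := evalWord X u.reverse`. If `p` is a
palindrome, so are `r * p * c` and `c⁻¹ * p * r⁻¹` (surround a palindromic word by `u` and its
reverse, resp. by their formal inverses). Conjugating `p₁ ⋯ pₖ` by `c` therefore gives
`(c⁻¹ p₁ r⁻¹) (r p₂ c) (c⁻¹ p₃ r⁻¹) ⋯`, which for even `k` ends in `(r pₖ c)`; for odd `k` it ends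
in `(c⁻¹ pₖ r⁻¹)` followed by the extra palindrome `r * c`. -/

section Palindromes

variable {G : Type*} [Group G] {n : ℕ} (X : Fin n → G)

def invWord (w : List (Fin n × Bool)) : List (Fin n × Bool) :=
  (w.map fun l => (l.1, !l.2)).reverse

lemma invWord_reverse (w : List (Fin n × Bool)) : invWord w.reverse = (invWord w).reverse := by
  simp [invWord, List.map_reverse]

lemma evalWord_nil : evalWord X [] = 1 := rfl

lemma evalWord_append (u v : List (Fin n × Bool)) :
    evalWord X (u ++ v) = evalWord X u * evalWord X v := by
  simp [evalWord]

lemma evalWord_invWord (w : List (Fin n × Bool)) : evalWord X (invWord w) = (evalWord X w)⁻¹ := by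
  induction w with
  | nil => simp [invWord, evalWord]
  | cons l w ih =>
    rw [invWord, List.map_cons, List.reverse_cons, ← invWord, evalWord_append, ih]
    obtain ⟨i, _ | _⟩ := l <;> simp [evalWord]

lemma exists_evalWord_eq (hX : Subgroup.closure (Set.range X) = ⊤) (g : G) :
    ∃ w, evalWord X w = g := by
  have hg : g ∈ Subgroup.closure (Set.range X) := hX ▸ Subgroup.mem_top g
  induction hg using Subgroup.closure_induction with
  | mem _ hx =>
    obtain ⟨i, rfl⟩ := hx
    exact ⟨[(i, true)], by simp [evalWord]⟩
  | one => exact ⟨[], evalWord_nil X⟩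
  | mul _ _ _ _ hx hy =>
    obtain ⟨u, rfl⟩ := hx
    obtain ⟨v, rfl⟩ := hy
    exact ⟨u ++ v, evalWord_append X u v⟩
  | inv _ _ hx =>
    obtain ⟨u, rfl⟩ := hx
    exact ⟨invWord u, evalWord_invWord X u⟩

lemma isPalindrome_one : IsPalindrome X 1 := ⟨[], rfl, rfl⟩

lemma IsPalindrome.reverse_mul_mul {p : G} (hp : IsPalindrome X p) (u : List (Fin n × Bool)) :
    IsPalindrome X (evalWord X u.reverse * p * evalWord X u) := by
  obtain ⟨w, hw, rfl⟩ := hp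
  exact ⟨u.reverse ++ w ++ u, by simp [hw], by simp only [evalWord_append]⟩

lemma IsPalindrome.inv_mul_mul_inv {p : G} (hp : IsPalindrome X p) (u : List (Fin n × Bool)) :
    IsPalindrome X ((evalWord X u)⁻¹ * p * (evalWord X u.reverse)⁻¹) := by
  simpa [← evalWord_invWord, invWord_reverse] using hp.reverse_mul_mul X (invWord u.reverse)

lemma isPalProd_zero : IsPalProd X 0 1 := ⟨Fin.elim0, fun i => i.elim0, rfl⟩

lemma isPalProd_succ_iff {k : ℕ} {g : G} :
    IsPalProd X (k + 1) g ↔ ∃ p b, IsPalindrome X p ∧ IsPalProd X k b ∧ p * b = g := by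
  constructor
  · rintro ⟨f, hf, rfl⟩
    exact ⟨f 0, _, hf 0, ⟨_, fun i => hf i.succ, rfl⟩, by simp [List.ofFn_succ]⟩
  · rintro ⟨p, _, hp, ⟨f, hf, rfl⟩, rfl⟩
    exact ⟨Fin.cons p f, Fin.cases hp hf, by simp [List.ofFn_succ]⟩

lemma isPalProd_conj_mul_mul {k : ℕ} {p q b : G} (u : List (Fin n × Bool))
    (hp : IsPalindrome X p) (hq : IsPalindrome X q)
    (hb : IsPalProd X k ((evalWord X u)⁻¹ * b * evalWord X u)) :
    IsPalProd X (k + 2) ((evalWord X u)⁻¹ * (p * (q * b)) * evalWord X u) := by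
  refine (isPalProd_succ_iff X).2 ⟨_, _, hp.inv_mul_mul_inv X u,
    (isPalProd_succ_iff X).2 ⟨_, _, hq.reverse_mul_mul X u, hb, rfl⟩, ?_⟩
  group

lemma IsPalProd.conj_of_even {k : ℕ} {a : G} (u : List (Fin n × Bool)) (hk : Even k)
    (ha : IsPalProd X k a) : IsPalProd X k ((evalWord X u)⁻¹ * a * evalWord X u) := by
  obtain ⟨m, rfl⟩ := hk
  induction m generalizing a with
  | zero =>
    obtain ⟨f, -, rfl⟩ := ha
    simpa using isPalProd_zero X
  | succ m ih =>
    rw [show m + 1 + (m + 1) = m + m + 1 + 1 by omega] at ha ⊢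
    obtain ⟨p, _, hp, hqb, rfl⟩ := (isPalProd_succ_iff X).1 ha
    obtain ⟨q, b, hq, hb, rfl⟩ := (isPalProd_succ_iff X).1 hqb
    exact isPalProd_conj_mul_mul X u hp hq (ih hb)

lemma IsPalProd.conj_of_odd {k : ℕ} {a : G} (u : List (Fin n × Bool)) (hk : Odd k)
    (ha : IsPalProd X k a) : IsPalProd X (k + 1) ((evalWord X u)⁻¹ * a * evalWord X u) := by
  obtain ⟨m, rfl⟩ := hk
  obtain ⟨p, b, hp, hb, rfl⟩ := (isPalProd_succ_iff X).1 ha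
  simpa using
    isPalProd_conj_mul_mul X u hp (isPalindrome_one X) (hb.conj_of_even X u (even_two_mul m))

end Palindromes

theorem isPalProd_of_conjugate_general {G : Type*} [Group G] {n : ℕ} (X : Fin n → G)
    (hX : Subgroup.closure (Set.range X) = ⊤) (k : ℕ) (g a c : G)
    (ha : IsPalProd X k a) (hg : g = c⁻¹ * a * c) :
    (Even k → IsPalProd X k g) ∧ (Odd k → IsPalProd X (k + 1) g) := by
  obtain ⟨u, rfl⟩ := exists_evalWord_eq X hX c
  subst hg
  exact ⟨fun hk => ha.conj_of_even X u hk, fun hk => ha.conj_of_odd X u hk⟩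

/-- Any element conjugate to a product of `k ≥ 1` palindromes is a product of `k`
palindromes if `k` is even, and of `k + 1` palindromes if `k` is odd. -/
theorem isPalProd_of_conjugate {G : Type*} [Group G] {n : ℕ} (X : Fin n → G)
    (hX : Subgroup.closure (Set.range X) = ⊤) (k : ℕ) (hk : 1 ≤ k) (g a c : G)
    (ha : IsPalProd X k a) (hg : g = c⁻¹ * a * c) :
    (Even k → IsPalProd X k g) ∧ (Odd k → IsPalProd X (k + 1) g) :=
  isPalProd_of_conjugate_general X hX k g a c ha hg
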